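/- arXiv:2106.10983 — 4 statements merged into one kernel-verified Lean document; each statement's English description precedes it below -/
import Mathlib

section
/- With Ψ, g, Q, H and A(φ) = {ψ : Q(ψ, φ) ≤ Q(φ, φ)} as above (g(ψ) = Q(ψ,φ) − H(ψ,φ), H(φ,φ) ≤ H(ψ,φ)), let ψ* be a global minimizer of g. Then for every ψ' ∈ A(ψ*): g(ψ') = g(ψ*) and Q(ψ', ψ*) = Q(ψ*, ψ*). -/
/-- Corollary 1(i): at a global minimizer `ψ*` of `g`, every point of the GEMS
mapping `A(ψ*) = {ψ : Q(ψ,ψ*) ≤ Q(ψ*,ψ*)}` attains equality in `g` and in `Q`. -/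
theorem gems_fixed_at_minimizer {Ψ : Type*} (g : Ψ → ℝ) (Q H : Ψ → Ψ → ℝ)
    (hgQH : ∀ ψ φ : Ψ, g ψ = Q ψ φ - H ψ φ)
    (hH : ∀ ψ φ : Ψ, H φ φ ≤ H ψ φ)
    (ψs : Ψ) (hmin : ∀ ψ : Ψ, g ψs ≤ g ψ) :
    ∀ ψ' ∈ {ψ : Ψ | Q ψ ψs ≤ Q ψs ψs},
      g ψ' = g ψs ∧ Q ψ' ψs = Q ψs ψs := by
  intro ψ' hQ
  have h1 := hgQH ψ' ψs
  have h2 := hgQH ψs ψs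
  have h3 := hH ψ' ψs
  have h4 := hmin ψ'
  constructor <;> linarith [Set.mem_setOf_eq ▸ hQ]
end

section
/- Let X be a topological space, Γ ⊆ X a 'solution set', A : X → Set X a point-to-set mapping, and (x_k) a sequence with x_{k+1} ∈ A(x_k). Assume: (i) all x_k lie in a compact set S ⊆ X; (ii) there is a continuous function Z : X → ℝ such that Z(y) < Z(x) for all y ∈ A(x) when x ∉ Γ, and Z(y) ≤ Z(x) for all y ∈ A(x) when x ∈ Γ; (iii) A is closed at every point outside Γ, meaning: if x_n → x ∉ Γ, y_n ∈ A(x_n), and y_n → y, then y ∈ A(x). Then the limit of any convergent subsequence of (x_k) lies in Γ. -/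
open Filter Topology

set_option maxHeartbeats 1000000

/-- Zangwill's Global Convergence Theorem: under (i) compactness of the iterates,
(ii) a continuous descent function `Z` which strictly decreases outside the
solution set `Γ`, and (iii) closedness of the point-to-set mapping `A` outside
`Γ`, the limit of any convergent subsequence of the iterates belongs to `Γ`. -/
theorem global_convergence_theorem {X : Type*} [MetricSpace X]
    (Γ : Set X) (A : X → Set X) (x : ℕ → X)
    (hiter : ∀ k : ℕ, x (k + 1) ∈ A (x k))
    (S : Set X) (hS : IsCompact S) (hxS : ∀ k, x k ∈ S)
    (Z : X → ℝ) (hZ : Continuous Z)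
    (hdesc₁ : ∀ a ∉ Γ, ∀ y ∈ A a, Z y < Z a)
    (hdesc₂ : ∀ a ∈ Γ, ∀ y ∈ A a, Z y ≤ Z a)
    (hclosed : ∀ a ∉ Γ, ∀ (u v : ℕ → X), Tendsto u atTop (𝓝 a) →
      (∀ n, v n ∈ A (u n)) → ∀ b : X, Tendsto v atTop (𝓝 b) → b ∈ A a)
    (φ : ℕ → ℕ) (hφ : StrictMono φ) (x' : X)
    (hconv : Tendsto (x ∘ φ) atTop (𝓝 x')) :
    x' ∈ Γ := by
  by_contra hx'
  -- Z ∘ x is antitone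
  have hanti : Antitone fun k => Z (x k) := by
    apply antitone_nat_of_succ_le
    intro k
    by_cases h : x k ∈ Γ
    · exact hdesc₂ _ h _ (hiter k)
    · exact (hdesc₁ _ h _ (hiter k)).le
  -- subsequence of Z converges to Z x'
  have hZsub : Tendsto (fun k => Z (x (φ k))) atTop (𝓝 (Z x')) :=
    (hZ.continuousAt.tendsto).comp hconv
  -- whole Z ∘ x converges to Z x'
  have hZall : Tendsto (fun k => Z (x k)) atTop (𝓝 (Z x')) := by
    rcases tendsto_of_antitone hanti with h | ⟨l, hl⟩
    · exact absurd (h.comp hφ.tendsto_atTop)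
        (not_tendsto_atBot_of_tendsto_nhds hZsub)
    · have : Tendsto (fun k => Z (x (φ k))) atTop (𝓝 l) :=
        hl.comp hφ.tendsto_atTop
      rwa [tendsto_nhds_unique this hZsub] at hl
  -- extract convergent subsequence of successors
  obtain ⟨y, -, ψ, hψ, hy⟩ :=
    hS.tendsto_subseq (x := fun k => x (φ k + 1)) (fun k => hxS _)
  have hu : Tendsto (fun k => x (φ (ψ k))) atTop (𝓝 x') :=
    hconv.comp hψ.tendsto_atTop
  have hyA : y ∈ A x' :=
    hclosed x' hx' _ _ hu (fun n => hiter (φ (ψ n))) y hy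
  have hlt : Z y < Z x' := hdesc₁ _ hx' _ hyA
  -- but Z of that subsequence converges to both Z y and Z x'
  have h1 : Tendsto (fun k => Z (x (φ (ψ k) + 1))) atTop (𝓝 (Z y)) :=
    (hZ.continuousAt.tendsto).comp hy
  have hidx : Tendsto (fun k => φ (ψ k) + 1) atTop atTop :=
    tendsto_atTop_mono (fun k => Nat.le_succ _) ((hφ.comp hψ).tendsto_atTop)
  have h2 : Tendsto (fun k => Z (x (φ (ψ k) + 1))) atTop (𝓝 (Z x')) :=
    hZall.comp hidx
  exact absurd (tendsto_nhds_unique h1 h2) hlt.ne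
end

section
/- Let T = (V, E) be a tree whose vertices are partitioned into 'categorical' and 'continuous' vertices. Suppose T contains no forbidden path, i.e., no path between two non-adjacent categorical vertices passing only through continuous vertices. Orient all edges away from a fixed categorical vertex R (or any vertex if no categorical vertex exists). Then in the resulting directed acyclic graph, every vertex has at most one parent, and no continuous vertex is the parent of a categorical vertex. -/
open SimpleGraph

/-- In a tree, any vertex `u` adjacent to `v` with `dist R u + 1 = dist R v`
is the second vertex of any path from `v` to `R`. -/
lemma parent_eq_snd {V : Type*} {T : SimpleGraph V} (hT : T.IsTree) {R u v : V}
    (h : T.Adj u v) (hd : T.dist R u + 1 = T.dist R v)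
    (p : T.Walk v R) (hp : p.IsPath) : u = p.getVert 1 := by
  haveI := Classical.decEq V
  obtain ⟨q, hq, hql⟩ := hT.isConnected.exists_path_of_dist u R
  have hvq : v ∉ q.support := by
    intro hv
    have h1 : T.dist v R ≤ (q.dropUntil v hv).length := SimpleGraph.dist_le _
    have h2 := SimpleGraph.Walk.length_dropUntil_le q hv
    have h3 : T.dist v R = T.dist R v := SimpleGraph.dist_comm ..
    have h4 : T.dist u R = T.dist R u := SimpleGraph.dist_comm ..
    omega
  have hw : (SimpleGraph.Walk.cons h.symm q).IsPath := hq.cons hvq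
  obtain ⟨pp, _, hun⟩ := hT.existsUnique_path v R
  have : SimpleGraph.Walk.cons h.symm q = p := (hun _ hw).trans (hun p hp).symm
  have := congrArg (fun w => SimpleGraph.Walk.getVert w 1) this
  simpa [SimpleGraph.Walk.getVert_cons_succ] using this

/-- In an SD-tree, the second vertex of a path between categorical vertices is
categorical. -/
lemma cat_snd {V : Type*} {T : SimpleGraph V} (hT : T.IsTree) (cat : V → Prop)
    (hforbidden : ∀ u v : V, cat u → cat v → ¬ T.Adj u v → u ≠ v →
      ∀ w : T.Walk u v, w.IsPath → ∃ x ∈ w.support, x ≠ u ∧ x ≠ v ∧ cat x) :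
    ∀ n (v x : V) (w : T.Walk v x), w.length ≤ n → w.IsPath → cat v → cat x →
      v ≠ x → cat (w.getVert 1) := by
  haveI := Classical.decEq V
  intro n
  induction n with
  | zero =>
    intro v x w hl _ _ _ hne
    exact absurd (SimpleGraph.Walk.eq_of_length_eq_zero (Nat.le_zero.mp hl)) hne
  | succ n ih =>
    intro v x w hl hw hcv hcx hne
    by_cases hadj : T.Adj v x
    · obtain ⟨pp, _, hun⟩ := hT.existsUnique_path v x
      have heq : w = (SimpleGraph.Path.singleton hadj : T.Walk v x) :=
        (hun _ hw).trans (hun _ (SimpleGraph.Path.singleton hadj).2).symm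
      rw [heq]
      simpa [SimpleGraph.Path.singleton, SimpleGraph.Walk.getVert_cons_succ] using hcx
    · obtain ⟨y, hy, hyv, hyx, hcy⟩ := hforbidden v x hcv hcx hadj hne w hw
      have hspec := SimpleGraph.Walk.take_spec w hy
      have hlen : (w.takeUntil y hy).length + (w.dropUntil y hy).length = w.length := by
        have := congrArg SimpleGraph.Walk.length hspec
        rw [SimpleGraph.Walk.length_append] at this
        exact this
      have hdrop : (w.dropUntil y hy).length ≠ 0 := fun h0 =>
        hyx (SimpleGraph.Walk.eq_of_length_eq_zero h0)
      have htake : (w.takeUntil y hy).length ≠ 0 := fun h0 =>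
        hyv ((SimpleGraph.Walk.eq_of_length_eq_zero h0)).symm
      have hgv : w.getVert 1 = (w.takeUntil y hy).getVert 1 := by
        conv_lhs => rw [← hspec]
        rw [SimpleGraph.Walk.getVert_append]
        by_cases h1 : 1 < (w.takeUntil y hy).length
        · simp [h1]
        · have h1' : (w.takeUntil y hy).length = 1 := by omega
          simp only [h1', lt_irrefl, if_false, Nat.sub_self,
            SimpleGraph.Walk.getVert_zero]
          rw [← h1', SimpleGraph.Walk.getVert_length]
      rw [hgv]
      exact ih v y (w.takeUntil y hy) (by omega) (hw.takeUntil hy) hcv hcy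
        (fun h => hyv h.symm)

/-- An SD-tree (a tree with no forbidden path, i.e. no path between two
non-adjacent categorical vertices passing only through continuous vertices),
oriented away from a root `R` (categorical, or arbitrary if there are no
categorical vertices), yields a single-parent DAG in which no continuous vertex
is the parent of a categorical vertex.  Here `u` is a parent of `v` iff
`u ~ v` and `dist R u + 1 = dist R v`. -/
theorem sdTree_single_parent_dag {V : Type*} (T : SimpleGraph V) (hT : T.IsTree)
    (cat : V → Prop) (R : V) (hR : cat R ∨ ∀ v : V, ¬ cat v)
    (hforbidden : ∀ u v : V, cat u → cat v → ¬ T.Adj u v → u ≠ v →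
      ∀ w : T.Walk u v, w.IsPath → ∃ x ∈ w.support, x ≠ u ∧ x ≠ v ∧ cat x) :
    (∀ v u u' : V,
        (T.Adj u v ∧ T.dist R u + 1 = T.dist R v) →
        (T.Adj u' v ∧ T.dist R u' + 1 = T.dist R v) → u = u') ∧
    (∀ u v : V, (T.Adj u v ∧ T.dist R u + 1 = T.dist R v) → cat v → cat u) := by
  constructor
  · rintro v u u' ⟨h1, h2⟩ ⟨h1', h2'⟩
    obtain ⟨p, hp, _⟩ := hT.existsUnique_path v R
    rw [parent_eq_snd hT h1 h2 p hp, parent_eq_snd hT h1' h2' p hp]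
  · rintro u v ⟨h1, h2⟩ hcv
    rcases hR with hcR | hnone
    · have hvR : v ≠ R := by
        intro h; rw [h, SimpleGraph.dist_self] at h2; omega
      obtain ⟨p, hp, hpl⟩ := hT.isConnected.exists_path_of_dist v R
      rw [parent_eq_snd hT h1 h2 p hp]
      exact cat_snd hT cat hforbidden p.length v R p le_rfl hp hcv hcR hvR
    · exact absurd hcv (hnone v)
end

section
/- Let Ψ be a compact metric space and Q : Ψ × Ψ → ℝ continuous, with H(ψ,φ) := Q(ψ,φ) − g(ψ) for a continuous g : Ψ → ℝ satisfying H(φ,φ) ≤ H(ψ,φ) for all ψ,φ. Suppose additionally Ψ1 ⊆ Ψ0, where Ψ1 = {φ : Q(φ,φ) ≤ Q(ψ,φ) ∀ψ} and Ψ0 = argmin g, and that Ψ0 = {ψ*} is a singleton. If (ψ_t) is generated by the EMS mapping ψ_{t+1} ∈ argmin_ψ Q(ψ, ψ_t), then ψ_t → ψ*. -/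
open Filter Topology

/-- Global convergence of the EMS algorithm (Jiang–Nguyen–Rao): on a compact
metric space, with `Q` jointly continuous, `g` continuous,
`H(ψ,φ) = Q(ψ,φ) − g(ψ)` satisfying the information inequality
`H(φ,φ) ≤ H(ψ,φ)`, and under the assumptions `Ψ1 ⊆ Ψ0` and `Ψ0 = {ψ*}`,
the EMS iterates `ψ_{t+1} ∈ argmin_ψ Q(ψ, ψ_t)` converge to `ψ*`. -/
theorem ems_global_convergence {Ψ : Type*} [MetricSpace Ψ] [CompactSpace Ψ]
    (Q : Ψ × Ψ → ℝ) (hQ : Continuous Q) (g : Ψ → ℝ) (hg : Continuous g)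
    (hH : ∀ ψ φ : Ψ, Q (φ, φ) - g φ ≤ Q (ψ, φ) - g ψ)
    (hΨ10 : ∀ φ : Ψ, (∀ ψ : Ψ, Q (φ, φ) ≤ Q (ψ, φ)) → ∀ ψ : Ψ, g φ ≤ g ψ)
    (ψs : Ψ) (hmin : ∀ ψ : Ψ, g ψs ≤ g ψ)
    (huniq : ∀ ψ : Ψ, (∀ ψ' : Ψ, g ψ ≤ g ψ') → ψ = ψs)
    (x : ℕ → Ψ) (hiter : ∀ t : ℕ, ∀ ψ : Ψ, Q (x (t + 1), x t) ≤ Q (ψ, x t)) :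
    Tendsto x atTop (𝓝 ψs) := by
  -- g along the iterates is antitone
  have hdec : ∀ t, g (x (t + 1)) ≤ g (x t) := by
    intro t
    have h1 := hH (x (t + 1)) (x t)
    have h2 := hiter t (x t)
    linarith
  have hanti : Antitone (fun t => g (x t)) := antitone_nat_of_succ_le hdec
  -- bounded below, so converges to some L
  have hbdd : BddBelow (Set.range fun t => g (x t)) :=
    ⟨g ψs, by rintro _ ⟨t, rfl⟩; exact hmin (x t)⟩
  obtain ⟨L, hL⟩ : ∃ L, Tendsto (fun t => g (x t)) atTop (𝓝 L) :=
    ⟨_, tendsto_atTop_ciInf hanti hbdd⟩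
  -- every cluster point is ψs
  apply tendsto_nhds_of_unique_mapClusterPt
  intro φ hφ
  obtain ⟨σ, hσ, hσlim⟩ := TopologicalSpace.FirstCountableTopology.tendsto_subseq hφ
  -- extract sub-subsequence of the shifted sequence converging to some φ'
  obtain ⟨φ', τ, hτ, hτlim⟩ := CompactSpace.tendsto_subseq (fun k => x (σ k + 1))
  have hlim1 : Tendsto (fun k => x (σ (τ k))) atTop (𝓝 φ) :=
    hσlim.comp hτ.tendsto_atTop
  -- g φ = L and g φ' = L
  have hgφ : g φ = L := by
    have h1 : Tendsto (fun k => g (x (σ k))) atTop (𝓝 (g φ)) :=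
      (hg.tendsto φ).comp hσlim
    have h2 : Tendsto (fun k => g (x (σ k))) atTop (𝓝 L) :=
      hL.comp hσ.tendsto_atTop
    exact tendsto_nhds_unique h1 h2
  have hgφ' : g φ' = L := by
    have h1 : Tendsto (fun k => g (x (σ (τ k) + 1))) atTop (𝓝 (g φ')) :=
      (hg.tendsto φ').comp hτlim
    have h2 : Tendsto (fun k => g (x (σ (τ k) + 1))) atTop (𝓝 L) := by
      have h3 : Tendsto (fun k => σ (τ k) + 1) atTop atTop :=
        (tendsto_add_atTop_nat 1).comp ((hσ.comp hτ).tendsto_atTop)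
      exact hL.comp h3
    exact tendsto_nhds_unique h1 h2
  -- Q (φ', φ) ≤ Q (ψ, φ) for all ψ
  have hQφ' : ∀ ψ, Q (φ', φ) ≤ Q (ψ, φ) := by
    intro ψ
    have h1 : Tendsto (fun k => Q (x (σ (τ k) + 1), x (σ (τ k)))) atTop (𝓝 (Q (φ', φ))) :=
      (hQ.tendsto (φ', φ)).comp (hτlim.prodMk_nhds hlim1)
    have h2 : Tendsto (fun k => Q (ψ, x (σ (τ k)))) atTop (𝓝 (Q (ψ, φ))) :=
      (hQ.tendsto (ψ, φ)).comp (tendsto_const_nhds.prodMk_nhds hlim1)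
    exact le_of_tendsto_of_tendsto h1 h2
      (Eventually.of_forall fun k => hiter (σ (τ k)) ψ)
  -- φ ∈ Ψ1
  have hφΨ1 : ∀ ψ, Q (φ, φ) ≤ Q (ψ, φ) := by
    intro ψ
    have h1 := hH φ' φ
    have h2 := hQφ' ψ
    have h3 := hQφ' φ'
    rw [hgφ, hgφ'] at h1
    linarith
  exact huniq φ (hΨ10 φ hφΨ1)
end
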